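/- arXiv:2305.10003 — 3 statements merged into one kernel-verified Lean document; each statement's English description precedes it below -/
import Mathlib

section
/- Encoding correctness: let Φ be a Boolean function over X ∪ Y ∪ Z with X = {x₁,…,xₙ} and dependency sets Hᵢ ⊆ Y ∪ Z. For Boolean functions φᵢ over Hᵢ, define Φ'(X', X, Y, Z) := Φ ∧ ⋀ᵢ (xᵢ ↔ ⋁_{m ∈ minterms(Hᵢ)} (x⟨i,m⟩ ∧ m)). Then for every assignment on Y ∪ Z, Φ[{xᵢ ↦ φᵢ}] holds iff (∃ X. Φ') holds under the assignment mapping each selector variable x⟨i,m⟩ to the truth value of 'the assignment satisfying m is a model of φᵢ'. -/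
/-- Encoding correctness: Φ[{xᵢ↦φᵢ}] holds at an assignment α on Y ∪ Z iff
∃X. Φ' holds, where Φ' = Φ ∧ ⋀ᵢ (xᵢ ↔ ⋁_{m ∈ minterms(Hᵢ)} (x⟨i,m⟩ ∧ m)) and each
selector x⟨i,m⟩ is set to whether the assignment corresponding to m is a model of φᵢ.
(Minterms over Hᵢ correspond to assignments β : Hᵢ → Bool; m holds at α iff α∘ιᵢ = β.) -/
theorem encoding_correctness {I V : Type} [Fintype I] {H : I → Type}
    [∀ i, Fintype (H i)] [∀ i, DecidableEq (H i)]
    (ι : ∀ i, H i → V) (Φ : (I → Bool) → (V → Bool) → Bool)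
    (φ : ∀ i, (H i → Bool) → Bool) (α : V → Bool) :
    Φ (fun i => φ i (α ∘ ι i)) α = true ↔
      ∃ χ : I → Bool,
        (Φ χ α &&
          decide (∀ i, χ i = true ↔
            ∃ β : H i → Bool, φ i β = true ∧ decide (α ∘ ι i = β) = true)) = true := by
  have key : ∀ (χ : I → Bool), (∀ i, χ i = true ↔
      ∃ β : H i → Bool, φ i β = true ∧ decide (α ∘ ι i = β) = true) ↔
      χ = fun i => φ i (α ∘ ι i) := by
    intro χ
    have hiff : ∀ i, (∃ β : H i → Bool, φ i β = true ∧ decide (α ∘ ι i = β) = true) ↔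
        φ i (α ∘ ι i) = true := by
      intro i
      constructor
      · rintro ⟨β, hβ, hβ'⟩
        have : α ∘ ι i = β := of_decide_eq_true hβ'
        rw [this]; exact hβ
      · intro hi; exact ⟨α ∘ ι i, hi, by simp⟩
    constructor
    · intro h
      funext i
      rcases Bool.eq_false_or_eq_true (χ i) with hc | hc <;> rw [hc]
      · exact ((hiff i).1 ((h i).1 hc)).symm
      · cases hφ : φ i (α ∘ ι i) with
        | false => rfl
        | true =>
          have : χ i = true := (h i).2 ((hiff i).2 hφ)
          rw [hc] at this; exact absurd this Bool.false_ne_true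
    · intro h i
      subst h
      rw [hiff i]
  constructor
  · intro h
    refine ⟨fun i => φ i (α ∘ ι i), ?_⟩
    rw [Bool.and_eq_true, decide_eq_true_eq]
    exact ⟨h, (key _).2 rfl⟩
  · rintro ⟨χ, hχ⟩
    rw [Bool.and_eq_true, decide_eq_true_eq] at hχ
    obtain ⟨h1, h2⟩ := hχ
    rw [(key χ).1 h2] at h1
    exact h1
end

section
/- Local method correctness for counting (Theorem 3, counting step): under the local decomposition identity and with u ∈ Y, |∃Z. Φ[σ_X]|_Y = |∃Z∖{u}. Φ_u[σ_{X,u}]|_{Y∖{u}} + |∃Z∖{u}. Φ_ū[σ_{X,ū}]|_{Y∖{u}}, where Φ_u, Φ_ū are the cofactors of Φ on u and σ_{X,u}, σ_{X,ū} are the cofactored substitutions. -/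
/-- Extend an assignment on A ∖ {a} to A by assigning b to a. -/
def extend {A : Type} [DecidableEq A] (a : A) (b : Bool)
    (β : {x : A // x ≠ a} → Bool) : A → Bool :=
  fun x => if h : x = a then b else β ⟨x, h⟩

/-- |∃Z. Φ[σ]|_Y : number of Y-projected models of Φ[σ]. -/
noncomputable def fullCount {I Y Z : Type} {H : I → Type} [Fintype Y] (ι : ∀ i, H i → Y ⊕ Z)
    (Φ : (I → Bool) → (Y ⊕ Z → Bool) → Bool)
    (σ : ∀ i, (H i → Bool) → Bool) : ℕ :=
  Nat.card {αY : Y → Bool // ∃ αZ : Z → Bool,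
    Φ (fun i => σ i ((Sum.elim αY αZ) ∘ ι i)) (Sum.elim αY αZ) = true}

/-- |∃Z∖{u}. Φ_b[σ_b]|_{Y∖{u}} : number of (Y∖{u})-projected models of the cofactor
Φ[u↦b] under a substitution over the restricted dependency sets Hᵢ∖{u}. -/
noncomputable def cofCount {I Y Z : Type} {H : I → Type} [Fintype Y] [DecidableEq Y]
    (u : Y) (uH : ∀ i, H i) (ι : ∀ i, H i → Y ⊕ Z)
    (Φ : (I → Bool) → (Y ⊕ Z → Bool) → Bool) (b : Bool)
    (σ : ∀ i, ({h : H i // h ≠ uH i} → Bool) → Bool) : ℕ :=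
  Nat.card {β : {y : Y // y ≠ u} → Bool // ∃ αZ : Z → Bool,
    Φ (fun i => σ i (fun h => (Sum.elim (extend u b β) αZ) (ι i h.val)))
      (Sum.elim (extend u b β) αZ) = true}

lemma ext_restrict {Y : Type} [DecidableEq Y] (u : Y) (b : Bool) (αY : Y → Bool)
    (hb : αY u = b) :
    extend u b (fun y : {y : Y // y ≠ u} => αY y.val) = αY := by
  funext y
  unfold extend
  split <;> simp_all

lemma restrict_ext {Y : Type} [DecidableEq Y] (u : Y) (b : Bool)
    (β : {y : Y // y ≠ u} → Bool) :
    (fun y : {y : Y // y ≠ u} => extend u b β y.val) = β := by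
  funext y
  simp [extend, y.prop]

lemma extend_at {Y : Type} [DecidableEq Y] (u : Y) (b : Bool)
    (β : {y : Y // y ≠ u} → Bool) : extend u b β u = b := by simp [extend]

lemma key_aux {I Y Z : Type} {H : I → Type} [DecidableEq Y] [∀ i, DecidableEq (H i)]
    (u : Y) (uH : ∀ i, H i) (ι : ∀ i, H i → Y ⊕ Z)
    (hι : ∀ i, ι i (uH i) = Sum.inl u)
    (σ : ∀ i, (H i → Bool) → Bool)
    (b : Bool) (αY : Y → Bool) (αZ : Z → Bool) (i : I) (hb : αY u = b) :
    σ i ((Sum.elim αY αZ) ∘ ι i)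
      = σ i (extend (uH i) b (fun h => (Sum.elim αY αZ) (ι i h.val))) := by
  congr 1
  funext h
  by_cases hh : h = uH i
  · subst hh
    simp [extend, hι i, Function.comp, hb]
  · simp [extend, hh, Function.comp]

lemma PQ_iff {I Y Z : Type} {H : I → Type} [DecidableEq Y] [∀ i, DecidableEq (H i)]
    (u : Y) (uH : ∀ i, H i) (ι : ∀ i, H i → Y ⊕ Z)
    (hι : ∀ i, ι i (uH i) = Sum.inl u)
    (Φ : (I → Bool) → (Y ⊕ Z → Bool) → Bool)
    (σ : ∀ i, (H i → Bool) → Bool)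
    (b : Bool) (αY : Y → Bool) (hb : αY u = b) :
    (∃ αZ : Z → Bool,
      Φ (fun i => σ i ((Sum.elim αY αZ) ∘ ι i)) (Sum.elim αY αZ) = true) ↔
    (∃ αZ : Z → Bool,
      Φ (fun i => σ i (extend (uH i) b
          (fun h => (Sum.elim (extend u b (fun y => αY y.val)) αZ) (ι i h.val))))
        (Sum.elim (extend u b (fun y => αY y.val)) αZ) = true) := by
  rw [ext_restrict u b αY hb]
  constructor <;> rintro ⟨αZ, h⟩ <;> refine ⟨αZ, ?_⟩
  · rw [show (fun i => σ i (extend (uH i) b (fun h => (Sum.elim αY αZ) (ι i h.val))))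
        = fun i => σ i ((Sum.elim αY αZ) ∘ ι i) from
      funext fun i => (key_aux u uH ι hι σ b αY αZ i hb).symm]
    exact h
  · rw [show (fun i => σ i ((Sum.elim αY αZ) ∘ ι i))
        = fun i => σ i (extend (uH i) b (fun h => (Sum.elim αY αZ) (ι i h.val))) from
      funext fun i => key_aux u uH ι hι σ b αY αZ i hb]
    exact h

/-- Local method, counting step (Theorem 3): for u ∈ Y occurring in every Hᵢ,
|∃Z. Φ[σ_X]|_Y = |∃Z. Φ_u[σ_{X,u}]|_{Y∖{u}} + |∃Z. Φ_ū[σ_{X,ū}]|_{Y∖{u}}. -/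
theorem local_counting {I Y Z : Type} {H : I → Type}
    [Fintype Y] [Fintype Z] [DecidableEq Y] [∀ i, DecidableEq (H i)]
    (u : Y) (uH : ∀ i, H i) (ι : ∀ i, H i → Y ⊕ Z)
    (hι : ∀ i, ι i (uH i) = Sum.inl u)
    (Φ : (I → Bool) → (Y ⊕ Z → Bool) → Bool)
    (σ : ∀ i, (H i → Bool) → Bool) :
    fullCount ι Φ σ =
      cofCount u uH ι Φ true (fun i β => σ i (extend (uH i) true β)) +
      cofCount u uH ι Φ false (fun i β => σ i (extend (uH i) false β)) := by
  classical
  unfold fullCount cofCount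
  have hPQ := PQ_iff u uH ι hι Φ σ
  have e : {αY : Y → Bool // ∃ αZ : Z → Bool,
        Φ (fun i => σ i ((Sum.elim αY αZ) ∘ ι i)) (Sum.elim αY αZ) = true} ≃
      {β : {y : Y // y ≠ u} → Bool // ∃ αZ : Z → Bool,
        Φ (fun i => σ i (extend (uH i) true
            (fun h => (Sum.elim (extend u true β) αZ) (ι i h.val))))
          (Sum.elim (extend u true β) αZ) = true} ⊕
      {β : {y : Y // y ≠ u} → Bool // ∃ αZ : Z → Bool,
        Φ (fun i => σ i (extend (uH i) false
            (fun h => (Sum.elim (extend u false β) αZ) (ι i h.val))))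
          (Sum.elim (extend u false β) αZ) = true} :=
    { toFun := fun x =>
        if hb : x.1 u = true then
          Sum.inl ⟨fun y => x.1 y.val, (hPQ true x.1 hb).mp x.2⟩
        else
          Sum.inr ⟨fun y => x.1 y.val,
            (hPQ false x.1 (by simpa using hb)).mp x.2⟩
      invFun := fun s => match s with
        | Sum.inl ⟨β, hq⟩ => ⟨extend u true β, by
            have h2 := hPQ true (extend u true β) (extend_at u true β)
            rw [restrict_ext u true β] at h2
            exact h2.mpr hq⟩
        | Sum.inr ⟨β, hq⟩ => ⟨extend u false β, by
            have h2 := hPQ false (extend u false β) (extend_at u false β)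
            rw [restrict_ext u false β] at h2
            exact h2.mpr hq⟩
      left_inv := by
        rintro ⟨αY, h⟩
        by_cases hb : αY u = true
        · simp only [hb, dif_pos]
          exact Subtype.ext (ext_restrict u true αY hb)
        · simp only [hb, dif_neg]
          exact Subtype.ext (ext_restrict u false αY (by simpa using hb))
      right_inv := by
        rintro (⟨β, hq⟩ | ⟨β, hq⟩)
        · simp only [extend_at u true β, dif_pos]
          exact congrArg Sum.inl (Subtype.ext (restrict_ext u true β))
        · simp only [extend_at u false β]
          simp only [Bool.false_eq_true, dif_neg, not_false_iff]
          exact congrArg Sum.inr (Subtype.ext (restrict_ext u false β)) }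
  rw [Nat.card_congr e, Nat.card_sum]
end

section
/- Local method optimality (Theorem 3): if u ∈ Y, and σ*_{X,u}, σ*_{X,ū} are substitutions (respecting dependencies Hᵢ∖{u}) maximizing the number of (Y∖{u})-projected models of ∃Z∖{u}. Φ_u[σ] and ∃Z∖{u}. Φ_ū[σ] respectively, then the substitution σ*_X defined by σ*_X(xᵢ) := (u ∧ σ*_{X,u}(xᵢ)) ∨ (¬u ∧ σ*_{X,ū}(xᵢ)) maximizes the number of Y-projected models of ∃Z. Φ[σ] over all substitutions σ respecting the dependencies Hᵢ (each containing u). -/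
lemma extend_restrict {A : Type} [DecidableEq A] (a : A) (b : Bool) (γ : A → Bool)
    (h : γ a = b) : extend a b (fun x => γ x.val) = γ := by
  funext x
  unfold extend
  split
  · rename_i hx; subst hx; exact h.symm
  · rfl

lemma restrict_extend {A : Type} [DecidableEq A] (a : A) (b : Bool)
    (β : {x : A // x ≠ a} → Bool) :
    (fun x : {x : A // x ≠ a} => extend a b β x.val) = β := by
  funext x
  unfold extend
  rw [dif_neg x.2]

lemma extend_self {A : Type} [DecidableEq A] (a : A) (b : Bool)
    (β : {x : A // x ≠ a} → Bool) : extend a b β a = b := by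
  unfold extend; rw [dif_pos rfl]

def boolSplit {α : Type} (f : α → Bool) (P : α → Prop) :
    {x : α // P x} ≃ {x : α // f x = true ∧ P x} ⊕ {x : α // f x = false ∧ P x} where
  toFun x := if h : f x.1 = true then .inl ⟨x.1, h, x.2⟩
    else .inr ⟨x.1, by simpa using h, x.2⟩
  invFun := Sum.elim (fun x => ⟨x.1, x.2.2⟩) (fun x => ⟨x.1, x.2.2⟩)
  left_inv x := by dsimp; split <;> rfl
  right_inv x := by
    rcases x with x | x
    · dsimp; rw [dif_pos x.2.1]
    · dsimp; rw [dif_neg (by simp [x.2.1])]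

lemma cof_equiv {I Y Z : Type} {H : I → Type}
    [Fintype Y] [Fintype Z] [DecidableEq Y] [∀ i, DecidableEq (H i)]
    (u : Y) (uH : ∀ i, H i) (ι : ∀ i, H i → Y ⊕ Z)
    (hι : ∀ i, ι i (uH i) = Sum.inl u)
    (Φ : (I → Bool) → (Y ⊕ Z → Bool) → Bool)
    (σ : ∀ i, (H i → Bool) → Bool) (b : Bool) :
    cofCount u uH ι Φ b (fun i δ => σ i (extend (uH i) b δ)) =
      Nat.card {αY : Y → Bool // αY u = b ∧ ∃ αZ : Z → Bool,
        Φ (fun i => σ i ((Sum.elim αY αZ) ∘ ι i)) (Sum.elim αY αZ) = true} := by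
  have inner : ∀ (αY : Y → Bool), αY u = b → ∀ (αZ : Z → Bool) (i : I),
      extend (uH i) b (fun h : {h : H i // h ≠ uH i} => Sum.elim αY αZ (ι i h.val))
        = (Sum.elim αY αZ) ∘ ι i := by
    intro αY hb αZ i
    refine extend_restrict (uH i) b ((Sum.elim αY αZ) ∘ ι i) ?_
    show Sum.elim αY αZ (ι i (uH i)) = b
    rw [hι i]; exact hb
  apply Nat.card_congr
  refine
    { toFun := fun x => ⟨extend u b x.1, extend_self u b x.1, ?_⟩
      invFun := fun x => ⟨fun y => x.1 y.val, ?_⟩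
      left_inv := ?_
      right_inv := ?_ }
  · obtain ⟨αZ, h⟩ := x.2
    refine ⟨αZ, ?_⟩
    have e : (fun i => σ i ((Sum.elim (extend u b x.1) αZ) ∘ ι i))
        = fun i => σ i (extend (uH i) b
            (fun h => Sum.elim (extend u b x.1) αZ (ι i h.val))) :=
      funext fun i => by rw [inner _ (extend_self u b x.1) αZ i]
    rw [e]; exact h
  · obtain ⟨hb, αZ, h⟩ := x.2
    refine ⟨αZ, ?_⟩
    have he : extend u b (fun y : {y : Y // y ≠ u} => x.1 y.val) = x.1 :=
      extend_restrict u b x.1 hb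
    rw [he]
    have e : (fun i => σ i (extend (uH i) b
        (fun h => Sum.elim x.1 αZ (ι i h.val))))
        = fun i => σ i ((Sum.elim x.1 αZ) ∘ ι i) :=
      funext fun i => by rw [inner _ hb αZ i]
    rw [e]; exact h
  · intro x
    apply Subtype.ext
    exact restrict_extend u b x.1
  · intro x
    apply Subtype.ext
    exact extend_restrict u b x.1 x.2.1

lemma full_split {I Y Z : Type} {H : I → Type}
    [Fintype Y] [Fintype Z] [DecidableEq Y] [∀ i, DecidableEq (H i)]
    (u : Y) (uH : ∀ i, H i) (ι : ∀ i, H i → Y ⊕ Z)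
    (hι : ∀ i, ι i (uH i) = Sum.inl u)
    (Φ : (I → Bool) → (Y ⊕ Z → Bool) → Bool)
    (σ : ∀ i, (H i → Bool) → Bool) :
    fullCount ι Φ σ =
      cofCount u uH ι Φ true (fun i δ => σ i (extend (uH i) true δ)) +
      cofCount u uH ι Φ false (fun i δ => σ i (extend (uH i) false δ)) := by
  rw [cof_equiv u uH ι hι Φ σ true, cof_equiv u uH ι hι Φ σ false]
  rw [fullCount, Nat.card_congr (boolSplit (fun αY : Y → Bool => αY u) _), Nat.card_sum]

/-- Local method optimality (Theorem 3): if σ*_{X,u} and σ*_{X,ū} are optimal for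
the two u-reduced subproblems, then σ*_X(xᵢ) := (u ∧ σ*_{X,u}(xᵢ)) ∨ (¬u ∧ σ*_{X,ū}(xᵢ))
is optimal for the original problem among all dependency-respecting substitutions. -/
theorem local_optimality {I Y Z : Type} {H : I → Type}
    [Fintype Y] [Fintype Z] [DecidableEq Y] [∀ i, DecidableEq (H i)]
    (u : Y) (uH : ∀ i, H i) (ι : ∀ i, H i → Y ⊕ Z)
    (hι : ∀ i, ι i (uH i) = Sum.inl u)
    (Φ : (I → Bool) → (Y ⊕ Z → Bool) → Bool)
    (σu σub : ∀ i, ({h : H i // h ≠ uH i} → Bool) → Bool)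
    (hu : ∀ τ : ∀ i, ({h : H i // h ≠ uH i} → Bool) → Bool,
      cofCount u uH ι Φ true τ ≤ cofCount u uH ι Φ true σu)
    (hub : ∀ τ : ∀ i, ({h : H i // h ≠ uH i} → Bool) → Bool,
      cofCount u uH ι Φ false τ ≤ cofCount u uH ι Φ false σub) :
    ∀ σ : ∀ i, (H i → Bool) → Bool,
      fullCount ι Φ σ ≤
        fullCount ι Φ (fun i γ =>
          ((γ (uH i) && σu i (fun h => γ h.val)) ||
           (!(γ (uH i)) && σub i (fun h => γ h.val)))) := by
  intro σ
  set σs : ∀ i, (H i → Bool) → Bool := fun i γ =>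
    ((γ (uH i) && σu i (fun h => γ h.val)) ||
     (!(γ (uH i)) && σub i (fun h => γ h.val))) with hσs
  have e1 : (fun i δ => σs i (extend (uH i) true δ)) = σu := by
    funext i δ
    simp [hσs, extend_self, restrict_extend]
  have e2 : (fun i δ => σs i (extend (uH i) false δ)) = σub := by
    funext i δ
    simp [hσs, extend_self, restrict_extend]
  rw [full_split u uH ι hι Φ σ, full_split u uH ι hι Φ σs, e1, e2]
  exact Nat.add_le_add (hu _) (hub _)
end
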